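/- Let 𝒜 and 𝓑 be reduced inverse automata over Ã such that 𝒜 →e^{w} 𝓑 for some nonempty reduced word w. Then either 𝒜 →i 𝓑 (an i-step), or 𝒜 →re^{(p,u,q)} 𝓑 for some states p, q of 𝒜 and some reduced word u with |u| ≤ |w|. -/

import Mathlib

open Function

/-- A letter of the symmetrized alphabet Ã: `(a, true)` stands for `a ∈ A` and
`(a, false)` for `a⁻¹ ∈ A⁻¹`. -/
abbrev Ltr (A : Type) := A × Bool

/-- Inversion of letters of Ã. -/
def Ltr.inv {A : Type} (x : Ltr A) : Ltr A := (x.1, !x.2)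

/-- The inverse `u⁻¹` of a word `u` over Ã. -/
def wordInv {A : Type} (w : List (Ltr A)) : List (Ltr A) := (w.map Ltr.inv).reverse

/-- A word over Ã is reduced iff it has no factor of the form `a a⁻¹` or `a⁻¹ a`. -/
def IsReducedWord {A : Type} (w : List (Ltr A)) : Prop :=
  ∀ (u v : List (Ltr A)) (a : A) (b : Bool), w ≠ u ++ (a, b) :: (a, !b) :: v

/-- An automaton over the symmetrized alphabet Ã, with a bundled state type `Q`,
an initial state `q0` and a set `E` of transitions. -/
structure Autom (A : Type) : Type 1 where
  Q : Type
  q0 : Q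
  E : Set (Q × Ltr A × Q)

namespace Autom

variable {A : Type}

/-- Paths using only transitions in the set `T`. -/
inductive PathOn (M : Autom A) (T : Set (M.Q × Ltr A × M.Q)) :
    M.Q → List (Ltr A) → M.Q → Prop
  | nil (q : M.Q) : PathOn M T q [] q
  | cons {p q r : M.Q} {a : Ltr A} {w : List (Ltr A)} :
      (p, a, q) ∈ T → PathOn M T q w r → PathOn M T p (a :: w) r

/-- `M.Path p u q` : the word `u` labels a path from state `p` to state `q` in `M`. -/
def Path (M : Autom A) : M.Q → List (Ltr A) → M.Q → Prop := M.PathOn M.E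

/-- The language L(𝒜) of words labeling a path from `q0` to `q0`. -/
def lang (M : Autom A) : Set (List (Ltr A)) := {w | M.Path M.q0 w M.q0}

/-- The set L(𝒜)ρ of reductions (in the free group `F(A)`) of words of L(𝒜). -/
def langRho (M : Autom A) : Set (FreeGroup A) := FreeGroup.mk '' M.lang

/-- Dual automaton: `(p,a,q)` is an edge iff `(q,a⁻¹,p)` is one. -/
def Dual (M : Autom A) : Prop := ∀ p a q, (p, a, q) ∈ M.E ↔ (q, Ltr.inv a, p) ∈ M.E

/-- Deterministic automaton. -/
def Deterministic (M : Autom A) : Prop :=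
  ∀ p a q q', (p, a, q) ∈ M.E → (p, a, q') ∈ M.E → q = q'

/-- Trim automaton: every state lies on a path from `q0` to `q0`. -/
def Trim (M : Autom A) : Prop := ∀ q, ∃ u v, M.Path M.q0 u q ∧ M.Path q v M.q0

/-- Inverse automaton: deterministic, trim and dual. -/
def IsInv (M : Autom A) : Prop := M.Deterministic ∧ M.Trim ∧ M.Dual

/-- Reduced automaton: every state lies on a path from `q0` to `q0` labeled by
a reduced word. -/
def IsRed (M : Autom A) : Prop :=
  ∀ q, ∃ u v, IsReducedWord (u ++ v) ∧ M.Path M.q0 u q ∧ M.Path q v M.q0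

/-- Homomorphisms of automata. -/
def IsHom (M N : Autom A) (φ : M.Q → N.Q) : Prop :=
  φ M.q0 = N.q0 ∧ ∀ p a q, (p, a, q) ∈ M.E → (φ p, a, φ q) ∈ N.E

/-- Isomorphism of automata. -/
def Isomorphic (M N : Autom A) : Prop :=
  ∃ φ : M.Q ≃ N.Q, M.IsHom N φ ∧ N.IsHom M φ.symm

/-- `N` is (isomorphic to) the automaton obtained from `M` by identifying the two
states `p` and `q`. -/
def IsIdentification (M : Autom A) (p q : M.Q) (N : Autom A) : Prop :=
  ∃ φ : M.Q → N.Q,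
    Surjective φ ∧ φ M.q0 = N.q0 ∧
    (∀ x y, φ x = φ y ↔ x = y ∨ (x = p ∧ y = q) ∨ (x = q ∧ y = p)) ∧
    (∀ e : N.Q × Ltr A × N.Q, e ∈ N.E ↔ ∃ e' ∈ M.E, e = (φ e'.1, e'.2.1, φ e'.2.2))

/-- `N` is (isomorphic to) the automaton obtained from `M` by deleting the state `q`
and all transitions involving it. -/
def IsDeletion (M : Autom A) (q : M.Q) (N : Autom A) : Prop :=
  ∃ φ : N.Q → M.Q,
    Injective φ ∧ Set.range φ = {x | x ≠ q} ∧ φ N.q0 = M.q0 ∧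
    (∀ e : N.Q × Ltr A × N.Q, e ∈ N.E ↔ (φ e.1, e.2.1, φ e.2.2) ∈ M.E)

/-- Elementary reduction of type 1. -/
def Red1 (M N : Autom A) : Prop :=
  ∃ p q r a, p ≠ q ∧ (r, a, p) ∈ M.E ∧ (r, a, q) ∈ M.E ∧ M.IsIdentification p q N

/-- Elementary reduction of type 2. -/
def Red2 (M N : Autom A) : Prop :=
  ∃ (p q : M.Q) (a : Ltr A), q ≠ M.q0 ∧ (p, a, q) ∈ M.E ∧ (q, Ltr.inv a, p) ∈ M.E ∧
    (∀ e ∈ M.E, e.1 = q ∨ e.2.2 = q → e = (p, a, q) ∨ e = (q, Ltr.inv a, p)) ∧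
    M.IsDeletion q N

/-- `N` is (isomorphic to) the reduction `Mρ` of `M`: perform elementary reductions
of type 1 until the automaton is deterministic, then elementary reductions of type 2
until none is possible. -/
def ReductionOf (M N : Autom A) : Prop :=
  ∃ M₁, Relation.ReflTransGen Red1 M M₁ ∧ M₁.Deterministic ∧
    Relation.ReflTransGen Red2 M₁ N ∧ ∀ N', ¬ Red2 N N'

/-- `N` is (isomorphic to) the expansion of `M` by `(p, w, q)`: a new path labeled `w`
from `p` to `q` (together with its inverse path) whose intermediate states are new. -/
def IsExpansion (M : Autom A) (p : M.Q) (w : List (Ltr A)) (q : M.Q) (N : Autom A) : Prop :=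
  w ≠ [] ∧
  ∃ (φ : M.Q → N.Q) (c : Fin (w.length + 1) → N.Q),
    Injective φ ∧ φ M.q0 = N.q0 ∧ c 0 = φ p ∧ c (Fin.last w.length) = φ q ∧
    (∀ i : Fin (w.length + 1), 0 < (i : ℕ) → (i : ℕ) < w.length → c i ∉ Set.range φ) ∧
    (∀ i j : Fin (w.length + 1), 0 < (i : ℕ) → (i : ℕ) < w.length → c i = c j → i = j) ∧
    (∀ x : N.Q, (∃ y, φ y = x) ∨ ∃ i, c i = x) ∧
    (∀ e : N.Q × Ltr A × N.Q, e ∈ N.E ↔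
      ((∃ e' ∈ M.E, e = (φ e'.1, e'.2.1, φ e'.2.2)) ∨
        ∃ i : Fin w.length,
          e = (c i.castSucc, w.get i, c i.succ) ∨
          e = (c i.succ, Ltr.inv (w.get i), c i.castSucc)))

/-- `M →exp^{(p,w,q)} N` : `N` is (isomorphic to) the reduction of the expansion
of `M` by `(p,w,q)`. -/
def ExpStep (M : Autom A) (p : M.Q) (w : List (Ltr A)) (q : M.Q) (N : Autom A) : Prop :=
  ∃ N' N'', M.IsExpansion p w q N' ∧ ReductionOf N' N'' ∧ Isomorphic N'' N

/-- `M →re^{(p,w,q)} N` : a reduced expansion, i.e. an expansion-then-reduction in which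
`M` embeds in `N`. -/
def REStep (M : Autom A) (p : M.Q) (w : List (Ltr A)) (q : M.Q) (N : Autom A) : Prop :=
  M.ExpStep p w q N ∧ ∃ ψ : M.Q → N.Q, Injective ψ ∧ M.IsHom N ψ

/-- `M →e^{w} N` : an e-step, i.e. `M →exp^{(q0,w,q0)} N`. -/
def EStep (M : Autom A) (w : List (Ltr A)) (N : Autom A) : Prop :=
  M.ExpStep M.q0 w M.q0 N

/-- `M →i^{p=q} N` : an i-step; `N` is (isomorphic to) the reduction of the automaton
obtained from `M` by identifying the distinct states `p` and `q`. -/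
def IStep (M : Autom A) (p q : M.Q) (N : Autom A) : Prop :=
  p ≠ q ∧ ∃ N' N'', M.IsIdentification p q N' ∧ ReductionOf N' N'' ∧ Isomorphic N'' N

/-- i-step, allowing `p = q` (in which case nothing happens). -/
def IStep' (M : Autom A) (p q : M.Q) (N : Autom A) : Prop :=
  (p = q ∧ M.Isomorphic N) ∨ M.IStep p q N

/-- `M →i N` : some i-step applies. -/
def IStepAny (M N : Autom A) : Prop := ∃ p q, M.IStep p q N

/-- Some reduced expansion (by a nonempty reduced word) applies. -/
def REStepAny (M N : Autom A) : Prop :=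
  ∃ p w q, IsReducedWord w ∧ M.REStep p w q N

/-- `M` is (isomorphic to) `Γ_A(H)` : a reduced inverse automaton with `L(M)ρ = H`. -/
def Represents (M : Autom A) (H : Subgroup (FreeGroup A)) : Prop :=
  M.IsInv ∧ M.IsRed ∧ M.langRho = ↑H

/-- The `q0`-diameter of an automaton: the maximum over all states `q` of the minimal
length of a reduced word labeling a path from `q0` to `q`. -/
noncomputable def diam (M : Autom A) : ℕ :=
  ⨆ q : M.Q, sInf {n | ∃ u, IsReducedWord u ∧ u.length = n ∧ M.Path M.q0 u q}

end Autom

/-- `S` is a basis of the subgroup `H`: `S` generates `H` and freely so. -/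
def IsFreeBasis {G : Type} [Group G] (S : Set G) (H : Subgroup G) : Prop :=
  Subgroup.closure S = H ∧
    Injective (FreeGroup.lift (Subtype.val : S → G) : FreeGroup S →* G)

/-- `H ≤ff K` : `H` is a free factor of `K`. -/
def FreeFactor {G : Type} [Group G] (H K : Subgroup G) : Prop :=
  ∃ B C : Set G, IsFreeBasis B H ∧ IsFreeBasis C K ∧ B ⊆ C

/-- The rank of a subgroup: the cardinality of a basis (the common value of
the cardinalities of all bases, when `H` is a finite-rank free group). -/
noncomputable def rk {G : Type} [Group G] (H : Subgroup G) : ℕ :=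
  sInf {n | ∃ S : Set G, IsFreeBasis S H ∧ S.ncard = n}

/-- `L` is a graphical free factor of `K` with respect to `A`: `Γ_A(L)` embeds
in `Γ_A(K)`. -/
def GraphicalFF {A : Type} (L K : Subgroup (FreeGroup A)) : Prop :=
  L ≤ K ∧ ∃ ML MK : Autom A, ML.Represents L ∧ MK.Represents K ∧
    ∃ ψ : ML.Q → MK.Q, Injective ψ ∧ ML.IsHom MK ψ

/-- A step (i-step or reduced expansion) from `M` to `N` of cost `c`. -/
def StepCost {A : Type} (M N : Autom A) (c : ℕ) : Prop :=
  (c = 0 ∧ Autom.IStepAny M N) ∨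
  (∃ p w q, IsReducedWord w ∧ w.length = c ∧ M.REStep p w q N)

/-- The well-order `≺` on cost sequences. -/
def costLT (k l : List ℕ) : Prop :=
  k.length < l.length ∨
  (k.length = l.length ∧ k.sum < l.sum) ∨
  (k.length = l.length ∧ k.sum = l.sum ∧ List.Lex (· < ·) k l)

/-!
Let `N₁` be the expansion of `M` by `(q0, w, q0)` and `σ : N₁ → N` the map realising its
reduction; `σ` identifies only fold-equivalent states. Read the longest prefix of `w` from `q0`
in `M` (states `x 0, …, x k`) and the longest suffix of `w` into `q0` (states `s l, …, s n`).

If `x i ≠ s i` for some `l ≤ i ≤ k`, the whole new path folds onto `M` once `x i` and `s i` are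
identified, so `N` is the reduction of that identification: an i-step.

Otherwise `M` together with the new path maps into a deterministic dual automaton, injectively
on `M`: the unread middle of `w` is attached as a path or, when both ends meet at one state and
it has the form `a v a⁻¹`, folded into a lollipop. Folding in `N₁` therefore identifies no two
states of `M`, so `M` embeds in `N` and the e-step is itself a reduced expansion, with `u = w`.
-/

namespace Ltr

variable {A : Type}

@[simp] theorem inv_inv (x : Ltr A) : Ltr.inv (Ltr.inv x) = x := by
  cases x; simp [Ltr.inv]

theorem inv_ne (x : Ltr A) : Ltr.inv x ≠ x := by
  cases x; simp [Ltr.inv]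

end Ltr

theorem IsReducedWord.ne_inv_of_map_range {A : Type} {W : ℕ → Ltr A} {n : ℕ}
    (h : IsReducedWord ((List.range n).map W)) {j : ℕ} (hj : j + 1 < n) :
    W (j + 1) ≠ Ltr.inv (W j) := by
  intro he
  obtain ⟨r, rfl⟩ : ∃ r, n = j + (r + 1 + 1) := ⟨n - (j + 2), by omega⟩
  apply h ((List.range j).map W) ((List.range' (j + 2) r).map W) (W j).1 (W j).2
  rw [List.range_eq_range', List.range_eq_range', ← List.range'_append]
  simp [List.range'_succ, he, Ltr.inv]

namespace Autom

variable {A : Type}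

def MapsEdges (G H : Autom A) (φ : G.Q → H.Q) : Prop :=
  ∀ p a q, (p, a, q) ∈ G.E → (φ p, a, φ q) ∈ H.E

def IsWalk (M : Autom A) (x : ℕ → M.Q) (W : ℕ → Ltr A) (a b : ℕ) : Prop :=
  ∀ j, a ≤ j → j < b → (x j, W j, x (j + 1)) ∈ M.E

theorem Dual.of_imp {M : Autom A}
    (h : ∀ p a q, (p, a, q) ∈ M.E → (q, Ltr.inv a, p) ∈ M.E) : M.Dual := fun p a q =>
  ⟨h p a q, fun h' => by simpa using h _ _ _ h'⟩

theorem Path.eq_of_nil {M : Autom A} {p q : M.Q} (h : M.Path p [] q) : p = q := by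
  cases h; rfl

theorem Path.eq_nil_or_exists_last {M : Autom A} {p q : M.Q} {u : List (Ltr A)}
    (h : M.Path p u q) : u = [] ∨ ∃ u' a y, u = u' ++ [a] ∧ (y, a, q) ∈ M.E := by
  induction h with
  | nil => exact Or.inl rfl
  | @cons p q r a w e h ih =>
    rcases ih with rfl | ⟨u', b, y, rfl, hy⟩
    · cases h; exact Or.inr ⟨[], a, p, rfl, e⟩
    · exact Or.inr ⟨a :: u', b, y, rfl, hy⟩

theorem Path.exists_entry {M : Autom A} {s t : M.Q} {u : List (Ltr A)} (h : M.Path s u t)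
    (hst : s ≠ t) : ∃ y b, y ≠ t ∧ (y, b, t) ∈ M.E := by
  induction h with
  | nil => exact absurd rfl hst
  | @cons p q r a _ e _ ih =>
    by_cases hq : q = r
    · exact ⟨p, a, hq ▸ hst, hq ▸ e⟩
    · exact ih hq

theorem MapsEdges.path {G H : Autom A} {φ : G.Q → H.Q} (hφ : G.MapsEdges H φ) {p q : G.Q}
    {u : List (Ltr A)} (h : G.Path p u q) : H.Path (φ p) u (φ q) := by
  induction h with
  | nil => exact PathOn.nil _
  | cons e _ ih => exact PathOn.cons (hφ _ _ _ e) ih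

theorem IsHom.mapsEdges {G H : Autom A} {φ : G.Q → H.Q} (hφ : G.IsHom H φ) :
    G.MapsEdges H φ := hφ.2

theorem IsHom.comp {G H K : Autom A} {φ : G.Q → H.Q} {ψ : H.Q → K.Q} (hψ : H.IsHom K ψ)
    (hφ : G.IsHom H φ) : G.IsHom K (ψ ∘ φ) :=
  ⟨(congrArg ψ hφ.1).trans hψ.1, fun _ _ _ h => hψ.2 _ _ _ (hφ.2 _ _ _ h)⟩

theorem IsRed.trim {M : Autom A} (hM : M.IsRed) : M.Trim := fun q => by
  obtain ⟨u, v, -, hu, hv⟩ := hM q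
  exact ⟨u, v, hu, hv⟩

theorem IsHom.eq_of_trim {G H : Autom A} (hG : G.Trim) (hH : H.Deterministic)
    {φ ψ : G.Q → H.Q} (hφ : G.IsHom H φ) (hψ : G.IsHom H ψ) : φ = ψ := by
  have key : ∀ {p q : G.Q} {u : List (Ltr A)}, G.Path p u q → φ p = ψ p → φ q = ψ q := by
    intro p q u h
    induction h with
    | nil => exact id
    | cons e _ ih => exact fun hp => ih (hH _ _ _ _ (hφ.2 _ _ _ e) (hp ▸ hψ.2 _ _ _ e))
  funext q
  obtain ⟨u, -, hu, -⟩ := hG q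
  exact key hu (hφ.1.trans hψ.1.symm)

theorem IsWalk.path {M : Autom A} {x : ℕ → M.Q} {W : ℕ → Ltr A} {a b : ℕ}
    (h : M.IsWalk x W a b) (hab : a ≤ b) :
    M.Path (x a) ((List.range' a (b - a)).map W) (x b) := by
  obtain ⟨l, rfl⟩ := Nat.exists_eq_add_of_le hab
  induction l generalizing a with
  | zero =>
    simp only [Nat.add_zero, Nat.sub_self, List.range'_zero, List.map_nil]
    exact PathOn.nil _
  | succ l ih =>
    rw [show a + (l + 1) - a = l + 1 by omega, List.range'_succ, List.map_cons]
    refine PathOn.cons (h a le_rfl (by omega)) ?_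
    have := ih (a := a + 1) (fun j h₁ h₂ => h j (by omega) (by omega)) (by omega)
    rwa [show a + 1 + l - (a + 1) = l by omega, show a + 1 + l = a + (l + 1) by omega] at this

theorem IsWalk.map {G H : Autom A} {φ : G.Q → H.Q} (hφ : G.MapsEdges H φ) {x : ℕ → G.Q}
    {W : ℕ → Ltr A} {a b : ℕ} (h : G.IsWalk x W a b) : H.IsWalk (φ ∘ x) W a b :=
  fun j h₁ h₂ => hφ _ _ _ (h j h₁ h₂)

theorem IsWalk.mono {M : Autom A} {x : ℕ → M.Q} {W : ℕ → Ltr A} {a b a' b' : ℕ}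
    (h : M.IsWalk x W a b) (ha : a ≤ a') (hb : b' ≤ b) : M.IsWalk x W a' b' :=
  fun j h₁ h₂ => h j (ha.trans h₁) (h₂.trans_le hb)

theorem IsWalk.concat {M : Autom A} {x s : ℕ → M.Q} {W : ℕ → Ltr A} {a i b : ℕ}
    (hx : M.IsWalk x W a i) (hs : M.IsWalk s W i b) (hai : a ≤ i) (hib : i ≤ b)
    (h : x i = s i) : ∃ z : ℕ → M.Q, z a = x a ∧ z b = s b ∧ M.IsWalk z W a b := by
  refine ⟨fun j => if j ≤ i then x j else s j, if_pos hai, ?_, fun j h₁ h₂ => ?_⟩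
  · rcases hib.eq_or_lt with rfl | hib
    exacts [(if_pos le_rfl).trans h, if_neg (Nat.not_le.2 hib)]
  rcases Nat.lt_or_ge j i with hj | hj
  · simpa [hj.le, Nat.succ_le_of_lt hj] using hx j h₁ hj
  rcases hj.eq_or_lt with rfl | hj
  · simpa [h] using hs _ le_rfl h₂
  · simpa [Nat.not_le.2 hj, show ¬ j + 1 ≤ i by omega] using hs j hj.le h₂

theorem IsWalk.eq_of_deterministic {M : Autom A} (hdet : M.Deterministic) {x y : ℕ → M.Q}
    {W : ℕ → Ltr A} {a b : ℕ} (hx : M.IsWalk x W a b) (hy : M.IsWalk y W a b)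
    (h : x a = y a) : ∀ j, a ≤ j → j ≤ b → x j = y j := by
  intro j h₁ h₂
  induction j, h₁ using Nat.le_induction with
  | base => exact h
  | succ j hj ih =>
    exact hdet _ _ _ _ (hx j hj (by omega)) (ih (by omega) ▸ hy j hj (by omega))

theorem IsWalk.eq_of_deterministic_rev {M : Autom A} (hdet : M.Deterministic) (hdual : M.Dual)
    {x y : ℕ → M.Q} {W : ℕ → Ltr A} {a b : ℕ} (hx : M.IsWalk x W a b)
    (hy : M.IsWalk y W a b) (h : x b = y b) : ∀ j, a ≤ j → j ≤ b → x j = y j := by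
  have key : ∀ d, d ≤ b - a → x (b - d) = y (b - d) := by
    intro d
    induction d with
    | zero => simpa using h
    | succ d ih =>
      intro hd
      have hlt : b - (d + 1) < b := by omega
      have e : b - (d + 1) + 1 = b - d := by omega
      have ex := (hdual _ _ _).1 (hx _ (by omega) hlt)
      have ey := (hdual _ _ _).1 (hy _ (by omega) hlt)
      rw [e] at ex ey
      exact hdet _ _ _ _ ex (ih (by omega) ▸ ey)
  intro j h₁ h₂
  simpa [show b - (b - j) = j by omega] using key (b - j) (by omega)

theorem exists_maximal_walk (M : Autom A) (p : M.Q) (W : ℕ → Ltr A) (n : ℕ) :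
    ∃ k ≤ n, ∃ x : ℕ → M.Q, x 0 = p ∧ M.IsWalk x W 0 k ∧
      (k < n → ∀ y, (x k, W k, y) ∉ M.E) := by
  classical
  induction n with
  | zero => exact ⟨0, le_rfl, fun _ => p, rfl, fun j _ h => absurd h (by omega), by omega⟩
  | succ n ih =>
    obtain ⟨k, hk, x, hx0, hx, hmax⟩ := ih
    by_cases hkn : k < n
    · exact ⟨k, by omega, x, hx0, hx, fun _ => hmax hkn⟩
    obtain rfl : k = n := by omega
    by_cases hy : ∃ y, (x k, W k, y) ∈ M.E
    · obtain ⟨y, hy⟩ := hy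
      refine ⟨k + 1, le_rfl, Function.update x (k + 1) y, ?_, fun j _ hj => ?_, by omega⟩
      · rw [Function.update_of_ne (by omega), hx0]
      · rcases Nat.lt_succ_iff_lt_or_eq.1 hj with hj | rfl
        · rw [Function.update_of_ne (by omega), Function.update_of_ne (by omega)]
          exact hx j (by omega) hj
        · rw [Function.update_self, Function.update_of_ne (by omega)]
          exact hy
    · push Not at hy
      exact ⟨k, by omega, x, hx0, hx, fun _ => hy⟩

theorem exists_maximal_walk_rev {M : Autom A} (hdual : M.Dual) (q : M.Q) (W : ℕ → Ltr A)
    (n : ℕ) : ∃ l ≤ n, ∃ s : ℕ → M.Q, s n = q ∧ M.IsWalk s W l n ∧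
      (0 < l → ∀ y, (y, W (l - 1), s l) ∉ M.E) := by
  obtain ⟨m, hm, x, hx0, hx, hmax⟩ :=
    exists_maximal_walk M q (fun j => Ltr.inv (W (n - 1 - j))) n
  refine ⟨n - m, by omega, fun j => x (n - j), by simpa using hx0, fun j h₁ h₂ => ?_,
    fun hl y hy => hmax (by omega) y ?_⟩
  · have e := hx (n - j - 1) (by omega) (by omega)
    dsimp only at e ⊢
    rw [show n - 1 - (n - j - 1) = j by omega, show n - j - 1 + 1 = n - j by omega] at e
    simpa [show n - (j + 1) = n - j - 1 by omega] using (hdual _ _ _).1 e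
  · dsimp only at hy
    rw [show n - (n - m) = m by omega, show n - m - 1 = n - 1 - m by omega] at hy
    exact (hdual _ _ _).1 hy

/-- The equivalence relation generated by folding pairs of transitions with the same source
and label; the reduction of `G` identifies only fold-equivalent states. -/
inductive Fold (G : Autom A) : G.Q → G.Q → Prop
  | refl (x : G.Q) : Fold G x x
  | symm {x y : G.Q} : Fold G x y → Fold G y x
  | trans {x y z : G.Q} : Fold G x y → Fold G y z → Fold G x z
  | move {r r' x y : G.Q} {a : Ltr A} :
      Fold G r r' → (r, a, x) ∈ G.E → (r', a, y) ∈ G.E → Fold G x y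

theorem Fold.map {G H : Autom A} {φ : G.Q → H.Q} (hφ : G.MapsEdges H φ) {x y : G.Q}
    (h : Fold G x y) : Fold H (φ x) (φ y) := by
  induction h with
  | refl => exact Fold.refl _
  | symm _ ih => exact ih.symm
  | trans _ _ ih₁ ih₂ => exact ih₁.trans ih₂
  | move _ e₁ e₂ ih => exact Fold.move ih (hφ _ _ _ e₁) (hφ _ _ _ e₂)

theorem Fold.eq_of_deterministic {G H : Autom A} (hH : H.Deterministic) {φ : G.Q → H.Q}
    (hφ : G.MapsEdges H φ) {x y : G.Q} (h : Fold G x y) : φ x = φ y := by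
  induction h with
  | refl => rfl
  | symm _ ih => exact ih.symm
  | trans _ _ ih₁ ih₂ => exact ih₁.trans ih₂
  | move _ e₁ e₂ ih => exact hH _ _ _ _ (ih ▸ hφ _ _ _ e₁) (hφ _ _ _ e₂)

theorem Fold.exists_fold_pair {G : Autom A} {x y : G.Q} (h : Fold G x y) (hne : x ≠ y) :
    ∃ p q r a, p ≠ q ∧ (r, a, p) ∈ G.E ∧ (r, a, q) ∈ G.E := by
  induction h with
  | refl => exact absurd rfl hne
  | symm _ ih => exact ih hne.symm
  | @trans x y z _ _ ih₁ ih₂ =>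
    by_cases hxy : x = y
    · exact ih₂ (hxy ▸ hne)
    · exact ih₁ hxy
  | @move r r' x y a _ e₁ e₂ ih =>
    by_cases hr : r = r'
    · exact ⟨x, y, r, a, hne, e₁, hr ▸ e₂⟩
    · exact ih hr

theorem Fold.of_identification {G G₁ : Autom A} {p q : G.Q} {φ : G.Q → G₁.Q}
    (hsurj : Surjective φ)
    (hfib : ∀ x y, φ x = φ y ↔ x = y ∨ (x = p ∧ y = q) ∨ (x = q ∧ y = p))
    (hE : ∀ e : G₁.Q × Ltr A × G₁.Q, e ∈ G₁.E ↔ ∃ e' ∈ G.E, e = (φ e'.1, e'.2.1, φ e'.2.2))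
    (hpq : Fold G p q) {x y : G.Q} (h : Fold G₁ (φ x) (φ y)) : Fold G x y := by
  have of_eq : ∀ {x y}, φ x = φ y → Fold G x y := fun {x y} hxy => by
    rcases (hfib x y).1 hxy with rfl | ⟨rfl, rfl⟩ | ⟨rfl, rfl⟩
    exacts [Fold.refl x, hpq, hpq.symm]
  suffices ∀ {x₁ y₁}, Fold G₁ x₁ y₁ → ∀ x y, φ x = x₁ → φ y = y₁ → Fold G x y from
    this h x y rfl rfl
  intro x₁ y₁ h
  induction h with
  | refl => exact fun x y hx hy => of_eq (hx.trans hy.symm)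
  | symm _ ih => exact fun x y hx hy => (ih y x hy hx).symm
  | @trans _ y₁ _ _ _ ih₁ ih₂ =>
    intro x y hx hy
    obtain ⟨z, rfl⟩ := hsurj y₁
    exact (ih₁ x z hx rfl).trans (ih₂ z y rfl hy)
  | move _ e₁ e₂ ih =>
    intro x y hx hy
    obtain ⟨⟨r, a, x'⟩, he₁, h₁⟩ := (hE _).1 e₁
    obtain ⟨⟨r', a', y'⟩, he₂, h₂⟩ := (hE _).1 e₂
    simp only at h₁ h₂
    obtain ⟨rfl, rfl, rfl⟩ := h₁
    obtain ⟨rfl, rfl, rfl⟩ := h₂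
    exact ((of_eq hx).trans (Fold.move (ih r r' rfl rfl) he₁ he₂)).trans (of_eq hy.symm)

open Classical in
/-- The quotient map identifying `q` with `p`, onto the states other than `q`. -/
noncomputable def collapse {Q : Type} (p : Q) {q : Q} (hne : p ≠ q) (z : Q) :
    {z : Q // z ≠ q} :=
  if h : z = q then ⟨p, hne⟩ else ⟨z, h⟩

theorem collapse_val {Q : Type} (p : Q) {q : Q} (hne : p ≠ q) (z : {z : Q // z ≠ q}) :
    collapse p hne z.val = z := by
  simp [collapse, z.prop]

theorem collapse_right {Q : Type} (p : Q) {q : Q} (hne : p ≠ q) :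
    collapse p hne q = collapse p hne p := by
  simp [collapse, hne]

theorem collapse_eq_iff {Q : Type} (p : Q) {q : Q} (hne : p ≠ q) (x y : Q) :
    collapse p hne x = collapse p hne y ↔ x = y ∨ (x = p ∧ y = q) ∨ (x = q ∧ y = p) := by
  unfold collapse
  by_cases hx : x = q <;> by_cases hy : y = q <;>
    simp only [hx, hy, dite_true, dite_false, Subtype.mk.injEq] <;> grind

noncomputable def identify (M : Autom A) {p q : M.Q} (hne : p ≠ q) : Autom A where
  Q := {z : M.Q // z ≠ q}
  q0 := collapse p hne M.q0
  E := {e | ∃ e' ∈ M.E, e = (collapse p hne e'.1, e'.2.1, collapse p hne e'.2.2)}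

theorem isIdentification_identify (M : Autom A) {p q : M.Q} (hne : p ≠ q) :
    M.IsIdentification p q (M.identify hne) :=
  ⟨collapse p hne, fun z => ⟨z.val, collapse_val p hne z⟩, rfl, collapse_eq_iff p hne,
    fun _ => Iff.rfl⟩

theorem isHom_collapse (M : Autom A) {p q : M.Q} (hne : p ≠ q) :
    M.IsHom (M.identify hne) (collapse p hne) :=
  ⟨rfl, fun x a y he => ⟨(x, a, y), he, rfl⟩⟩

theorem apply_collapse_val {Q Z : Type} (p : Q) {q : Q} (hne : p ≠ q) {f : Q → Z}
    (hf : f p = f q) (z : Q) : f (collapse p hne z).val = f z := by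
  unfold collapse
  split_ifs with h
  · rw [h, hf]
  · rfl

theorem IsHom.identify {M X : Autom A} {π : M.Q → X.Q} (hπ : M.IsHom X π) {p q : M.Q}
    (hne : p ≠ q) (hpq : π p = π q) : (M.identify hne).IsHom X (fun z => π z.val) := by
  have hval := apply_collapse_val p hne hpq
  refine ⟨(hval M.q0).trans hπ.1, ?_⟩
  rintro _ _ _ ⟨⟨x, a, y⟩, he, h⟩
  simp only at h
  obtain ⟨rfl, rfl, rfl⟩ := h
  simpa [hval] using hπ.2 _ _ _ he

theorem Dual.identify {M : Autom A} (hdual : M.Dual) {p q : M.Q} (hne : p ≠ q) :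
    (M.identify hne).Dual := Dual.of_imp <| by
  rintro _ _ _ ⟨⟨x, a, y⟩, he, h⟩
  simp only at h
  obtain ⟨rfl, rfl, rfl⟩ := h
  exact ⟨(y, _, x), (hdual _ _ _).1 he, rfl⟩

/-- The expansion of `M` by `(p, W 0 ⋯ W (n-1), q)`, with its new path indexed by `ℕ`:
`st j` is the state reached after reading `W 0 ⋯ W (j-1)` along it. -/
structure Expansion (M : Autom A) (p : M.Q) (W : ℕ → Ltr A) (n : ℕ) (q : M.Q)
    (N : Autom A) where
  emb : M.Q → N.Q
  st : ℕ → N.Q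
  emb_injective : Injective emb
  emb_q0 : emb M.q0 = N.q0
  st_zero : st 0 = emb p
  st_n : st n = emb q
  st_ne_emb : ∀ j z, 0 < j → j < n → st j ≠ emb z
  st_inj : ∀ i j, 0 < i → i < n → j ≤ n → st j = st i → j = i
  cover : ∀ x, (∃ z, emb z = x) ∨ ∃ j ≤ n, st j = x
  mem_E : ∀ x a y, (x, a, y) ∈ N.E ↔
    (∃ x' y', (x', a, y') ∈ M.E ∧ x = emb x' ∧ y = emb y') ∨
      ∃ j < n, (x = st j ∧ a = W j ∧ y = st (j + 1)) ∨
        (x = st (j + 1) ∧ a = Ltr.inv (W j) ∧ y = st j)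

theorem IsExpansion.exists_expansion {M N : Autom A} {p q : M.Q} {w : List (Ltr A)}
    (h : M.IsExpansion p w q N) :
    ∃ W : ℕ → Ltr A, w = (List.range w.length).map W ∧
      Nonempty (M.Expansion p W w.length q N) := by
  obtain ⟨hw, φ, c, hinj, hq0, hc0, hcn, hint, hcinj, hcover, hE⟩ := h
  let W : ℕ → Ltr A := fun j => w.getD j (w.head hw)
  have hW : ∀ i : Fin w.length, w.get i = W i := fun i => (List.getD_eq_getElem _ _ i.2).symm
  let st : ℕ → N.Q := fun j => if h : j ≤ w.length then c ⟨j, by omega⟩ else N.q0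
  have hst : ∀ i : Fin (w.length + 1), st i = c i := fun i => by
    simp [st, Nat.lt_succ_iff.1 i.2]
  refine ⟨W, List.ext_getElem (by simp) fun j h₁ _ => by simp [W, List.getElem?_eq_getElem h₁],
    ⟨φ, st, hinj, hq0, hst 0 ▸ hc0, hst (Fin.last _) ▸ hcn,
    fun j z h₁ h₂ hz => hint ⟨j, by omega⟩ h₁ h₂ ⟨z, hz.symm.trans (hst ⟨j, by omega⟩)⟩,
    fun i j h₁ h₂ h₃ he => (congrArg Fin.val (hcinj ⟨i, by omega⟩ ⟨j, by omega⟩ h₁ h₂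
      ((hst ⟨i, by omega⟩).symm.trans (he.symm.trans (hst ⟨j, by omega⟩))))).symm,
    fun x => (hcover x).imp_right fun ⟨i, hi⟩ => ⟨i, by omega, (hst i).trans hi⟩,
    fun x a y => ?_⟩⟩
  rw [hE]
  refine or_congr ⟨fun ⟨⟨x', a', y'⟩, he, h⟩ => ?_, fun ⟨x', y', he, hx, hy⟩ => ?_⟩
    ⟨fun ⟨i, hi⟩ => ⟨i, i.2, ?_⟩, fun ⟨j, hj, hj'⟩ => ⟨⟨j, hj⟩, ?_⟩⟩
  · simp only [Prod.mk.injEq] at h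
    obtain ⟨rfl, rfl, rfl⟩ := h
    exact ⟨x', y', he, rfl, rfl⟩
  · exact ⟨(x', a, y'), he, by rw [hx, hy]⟩
  · have h₁ : st i = c i.castSucc := hst i.castSucc
    have h₂ : st (i + 1) = c i.succ := hst i.succ
    simpa only [Prod.mk.injEq, h₁, h₂, hW] using hi
  · have h₁ : st j = c (Fin.castSucc ⟨j, hj⟩) := hst (Fin.castSucc ⟨j, hj⟩)
    have h₂ : st (j + 1) = c (Fin.succ ⟨j, hj⟩) := hst (Fin.succ ⟨j, hj⟩)
    simpa only [Prod.mk.injEq, ← h₁, ← h₂, hW] using hj'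

namespace Expansion

variable {M N : Autom A} {p q : M.Q} {W : ℕ → Ltr A} {n : ℕ}
  (E : M.Expansion p W n q N)

theorem isHom_emb : M.IsHom N E.emb :=
  ⟨E.emb_q0, fun x _ y he => (E.mem_E _ _ _).2 (Or.inl ⟨x, y, he, rfl, rfl⟩)⟩

theorem isWalk_st : N.IsWalk E.st W 0 n :=
  fun j _ hj => (E.mem_E _ _ _).2 (Or.inr ⟨j, hj, Or.inl ⟨rfl, rfl, rfl⟩⟩)

theorem isRed (E : M.Expansion M.q0 W n M.q0 N) (hM : M.IsRed)
    (hW : IsReducedWord ((List.range n).map W)) : N.IsRed := by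
  intro x
  rcases E.cover x with ⟨z, rfl⟩ | ⟨j, hj, rfl⟩
  · obtain ⟨u, v, hred, hu, hv⟩ := hM z
    exact ⟨u, v, hred, E.emb_q0 ▸ E.isHom_emb.mapsEdges.path hu,
      E.emb_q0 ▸ E.isHom_emb.mapsEdges.path hv⟩
  · have hu := (E.isWalk_st.mono le_rfl hj).path (Nat.zero_le j)
    have hv := (E.isWalk_st.mono (Nat.zero_le j) le_rfl).path hj
    rw [E.st_zero, E.emb_q0] at hu
    rw [E.st_n, E.emb_q0] at hv
    refine ⟨_, _, ?_, hu, hv⟩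
    have happ := List.range'_append (s := 0) (m := j) (n := n - j) (step := 1)
    rw [Nat.zero_add, Nat.one_mul, show j + (n - j) = n by omega] at happ
    rwa [← List.map_append, Nat.sub_zero, happ, ← List.range_eq_range']

theorem map_emb_prefix {X : Autom A} (hX : X.Deterministic) {τ : N.Q → X.Q}
    (hτ : N.MapsEdges X τ) {x : ℕ → M.Q} {i : ℕ} (hi : i ≤ n) (hx0 : x 0 = p)
    (hx : M.IsWalk x W 0 i) : τ (E.emb (x i)) = τ (E.st i) :=
  ((hx.map E.isHom_emb.mapsEdges).map hτ).eq_of_deterministic hX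
    ((E.isWalk_st.map hτ).mono le_rfl hi) (by simp [hx0, E.st_zero]) i (Nat.zero_le i) le_rfl

theorem map_emb_suffix {X : Autom A} (hX : X.Deterministic) (hXd : X.Dual)
    {τ : N.Q → X.Q} (hτ : N.MapsEdges X τ) {s : ℕ → M.Q} {i : ℕ} (hi : i ≤ n)
    (hsn : s n = q) (hs : M.IsWalk s W i n) : τ (E.emb (s i)) = τ (E.st i) :=
  ((hs.map E.isHom_emb.mapsEdges).map hτ).eq_of_deterministic_rev hX hXd
    ((E.isWalk_st.map hτ).mono (Nat.zero_le i) le_rfl) (by simp [hsn, E.st_n]) i le_rfl hi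

theorem exists_lift {Y : Autom A} (hY : Y.Dual) {f : M.Q → Y.Q} (hf : M.MapsEdges Y f)
    {y : ℕ → Y.Q} (hy0 : y 0 = f p) (hyn : y n = f q) (hy : Y.IsWalk y W 0 n) :
    ∃ F : N.Q → Y.Q, N.MapsEdges Y F ∧ (∀ z, F (E.emb z) = f z) ∧
      ∀ j ≤ n, F (E.st j) = y j := by
  classical
  let F : N.Q → Y.Q := fun x =>
    if h : ∃ z, E.emb z = x then f h.choose
    else if h' : ∃ j, j ≤ n ∧ E.st j = x then y h'.choose else f p
  have hFemb : ∀ z, F (E.emb z) = f z := fun z => by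
    have h : ∃ z', E.emb z' = E.emb z := ⟨z, rfl⟩
    simp only [F, dif_pos h, E.emb_injective h.choose_spec]
  have hFst : ∀ j ≤ n, F (E.st j) = y j := by
    intro j hj
    rcases Nat.eq_zero_or_pos j with rfl | hpos
    · rw [E.st_zero, hFemb, hy0]
    rcases hj.eq_or_lt with rfl | hlt
    · rw [E.st_n, hFemb, hyn]
    have h : ¬∃ z, E.emb z = E.st j := fun ⟨z, hz⟩ => E.st_ne_emb j z hpos hlt hz.symm
    have h' : ∃ j', j' ≤ n ∧ E.st j' = E.st j := ⟨j, hj, rfl⟩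
    simp only [F, dif_neg h, dif_pos h',
      E.st_inj j _ hpos hlt h'.choose_spec.1 h'.choose_spec.2]
  refine ⟨F, fun _ _ _ he => ?_, hFemb, hFst⟩
  rcases (E.mem_E _ _ _).1 he with
    ⟨z, z', hz, rfl, rfl⟩ | ⟨j, hj, ⟨rfl, rfl, rfl⟩ | ⟨rfl, rfl, rfl⟩⟩
  · rw [hFemb, hFemb]; exact hf _ _ _ hz
  · rw [hFst j hj.le, hFst (j + 1) hj]; exact hy j (Nat.zero_le j) hj
  · rw [hFst j hj.le, hFst (j + 1) hj]; exact (hY _ _ _).1 (hy j (Nat.zero_le j) hj)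

end Expansion

/-- A reduced loop at `q0` through the image of `z` would enter and leave `q` through its
only transition, and so backtrack. -/
theorem IsRed.apply_ne_pendant {S G : Autom A} (hS : S.IsRed) {σ : S.Q → G.Q}
    (hσ : S.IsHom G σ) {p q : G.Q} {a : Ltr A} (hq0 : q ≠ G.q0) (hpq : (p, a, q) ∈ G.E)
    (honly : ∀ e ∈ G.E, e.1 = q ∨ e.2.2 = q → e = (p, a, q) ∨ e = (q, Ltr.inv a, p))
    (z : S.Q) : σ z ≠ q := by
  intro hz
  obtain ⟨u, v, hred, hu, hv⟩ := hS z
  have hu' : G.Path G.q0 u q := hσ.1 ▸ hz ▸ hσ.mapsEdges.path hu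
  have hv' : G.Path q v G.q0 := hσ.1 ▸ hz ▸ hσ.mapsEdges.path hv
  have hpq' : p ≠ q := by
    obtain ⟨y, b, hyq, hy⟩ := hu'.exists_entry hq0.symm
    rcases honly _ hy (Or.inr rfl) with h | h <;> simp only [Prod.mk.injEq] at h
    exacts [h.1 ▸ hyq, absurd h.1 hyq]
  obtain rfl | ⟨u', b, y, rfl, hy⟩ := hu'.eq_nil_or_exists_last
  · exact hq0 hu'.eq_of_nil.symm
  obtain rfl : b = a := by
    rcases honly _ hy (Or.inr rfl) with h | h <;> simp only [Prod.mk.injEq] at h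
    exacts [h.2.1, absurd h.2.2 hpq'.symm]
  cases hv' with
  | nil => exact hq0 rfl
  | @cons _ _ _ c v' e _ =>
    obtain rfl : c = Ltr.inv b := by
      rcases honly _ e (Or.inl rfl) with h | h <;> simp only [Prod.mk.injEq] at h
      exacts [absurd h.1 hpq'.symm, h.2.1]
    exact hred u' v' b.1 b.2 (by simp [Ltr.inv])

theorem IsRed.not_red2_of_surjective {S G : Autom A} (hS : S.IsRed) {σ : S.Q → G.Q}
    (hσ : S.IsHom G σ) (hsurj : Surjective σ) (G' : Autom A) : ¬ Red2 G G' := by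
  rintro ⟨p, q, a, hq0, hpq, -, honly, -⟩
  obtain ⟨z, hz⟩ := hsurj q
  exact hS.apply_ne_pendant hσ hq0 hpq honly z hz

def kerPairs {α β : Type} (f : α → β) : Set (α × α) := {xy | f xy.1 = f xy.2 ∧ xy.1 ≠ xy.2}

/-- The invariant carried along a reduction from `S` to `G`. -/
structure IsFolding (S G : Autom A) (σ : S.Q → G.Q) : Prop where
  isHom : S.IsHom G σ
  surjective : Surjective σ
  edge_surjective : ∀ e ∈ G.E, ∃ e' ∈ S.E, e = (σ e'.1, e'.2.1, σ e'.2.2)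
  fold_of_fold : ∀ x y, Fold G (σ x) (σ y) → Fold S x y
  finite_ker : (kerPairs σ).Finite

namespace IsFolding

theorem id (S : Autom A) : IsFolding S S id :=
  ⟨⟨rfl, fun _ _ _ h => h⟩, surjective_id, fun e he => ⟨e, he, rfl⟩, fun _ _ h => h,
    Set.finite_empty.subset fun _ h => h.2 h.1⟩

variable {S G : Autom A} {σ : S.Q → G.Q}

theorem fold_of_eq (hσ : IsFolding S G σ) {x y : S.Q} (h : σ x = σ y) : Fold S x y :=
  hσ.fold_of_fold x y (h ▸ Fold.refl _)

theorem finite_fiber (hσ : IsFolding S G σ) (z : G.Q) : (σ ⁻¹' {z}).Finite := by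
  rcases (σ ⁻¹' {z}).eq_empty_or_nonempty with h | ⟨x₀, hx₀⟩
  · exact h ▸ Set.finite_empty
  refine ((hσ.finite_ker.image Prod.snd).insert x₀).subset fun x hx => ?_
  by_cases hxx : x = x₀
  · exact Or.inl hxx
  · exact Or.inr ⟨(x₀, x), ⟨hx₀.trans hx.symm, Ne.symm hxx⟩, rfl⟩

theorem of_embedding (hσ : IsFolding S G σ) {G₂ : Autom A} {ψ : G₂.Q → G.Q}
    (hψ : Injective ψ) (hq0 : ψ G₂.q0 = G.q0)
    (hE : ∀ x a y, (x, a, y) ∈ G₂.E ↔ (ψ x, a, ψ y) ∈ G.E)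
    (hrange : ∀ z, ∃ y, ψ y = σ z) : ∃ σ₂ : S.Q → G₂.Q, IsFolding S G₂ σ₂ := by
  choose σ₂ hσ₂ using hrange
  refine ⟨σ₂, ⟨hψ (by rw [hσ₂, hσ.isHom.1, hq0]), fun x a y he => ?_⟩, fun y => ?_,
    fun ⟨x, a, y⟩ he => ?_, fun x y h => ?_, hσ.finite_ker.subset fun xy h => ?_⟩
  · rw [hE, hσ₂, hσ₂]; exact hσ.isHom.2 _ _ _ he
  · obtain ⟨z, hz⟩ := hσ.surjective (ψ y)
    exact ⟨z, hψ (by rw [hσ₂, hz])⟩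
  · obtain ⟨⟨x', a', y'⟩, he', h⟩ := hσ.edge_surjective _ ((hE _ _ _).1 he)
    simp only [Prod.mk.injEq] at h
    obtain ⟨hx, rfl, hy⟩ := h
    exact ⟨_, he', by rw [hψ (hx.trans (hσ₂ x').symm), hψ (hy.trans (hσ₂ y').symm)]⟩
  · refine hσ.fold_of_fold x y ?_
    simpa only [hσ₂] using h.map fun x a y h => (hE x a y).1 h
  · exact ⟨by rw [← hσ₂, ← hσ₂, h.1], h.2⟩

theorem red1 (hσ : IsFolding S G σ) {G₁ : Autom A} (h : Red1 G G₁) :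
    ∃ σ₁ : S.Q → G₁.Q, IsFolding S G₁ σ₁ := by
  obtain ⟨p, q, r, a, -, e₁, e₂, φ, hsurj, hq0, hfib, hE⟩ := h
  have hpq : Fold G p q := Fold.move (Fold.refl r) e₁ e₂
  refine ⟨φ ∘ σ, ⟨by simp [hσ.isHom.1, hq0], fun x a y he =>
      (hE _).2 ⟨_, hσ.isHom.2 _ _ _ he, rfl⟩⟩, hsurj.comp hσ.surjective, fun e he => ?_,
    fun x y h => hσ.fold_of_fold x y (Fold.of_identification hsurj hfib hE hpq h), ?_⟩
  · obtain ⟨e', he', rfl⟩ := (hE _).1 he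
    obtain ⟨e'', he'', rfl⟩ := hσ.edge_surjective e' he'
    exact ⟨e'', he'', rfl⟩
  · refine ((hσ.finite_ker.union ((hσ.finite_fiber p).prod (hσ.finite_fiber q))).union
      ((hσ.finite_fiber q).prod (hσ.finite_fiber p))).subset ?_
    rintro ⟨x, y⟩ ⟨hxy, hne⟩
    rcases (hfib (σ x) (σ y)).1 hxy with h | ⟨h₁, h₂⟩ | ⟨h₁, h₂⟩
    exacts [Or.inl (Or.inl ⟨h, hne⟩), Or.inl (Or.inr ⟨h₁, h₂⟩), Or.inr ⟨h₁, h₂⟩]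

theorem red2 (hσ : IsFolding S G σ) (hS : S.IsRed) {G₂ : Autom A} (h : Red2 G G₂) :
    ∃ σ₂ : S.Q → G₂.Q, IsFolding S G₂ σ₂ := by
  obtain ⟨p, q, a, hq0, hpq, -, honly, ψ, hψ, hrange, hψq0, hE⟩ := h
  refine hσ.of_embedding hψ hψq0 (fun x a y => hE (x, a, y)) fun z => ?_
  have : σ z ∈ Set.range ψ := hrange ▸ hS.apply_ne_pendant hσ.isHom hq0 hpq honly z
  exact this

theorem isomorphic (hσ : IsFolding S G σ) {H : Autom A} (h : Isomorphic G H) :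
    ∃ σ' : S.Q → H.Q, IsFolding S H σ' := by
  obtain ⟨e, he, he'⟩ := h
  refine hσ.of_embedding e.symm.injective he'.1 (fun x a y => ⟨he'.2 x a y, fun h => ?_⟩)
    fun z => e.symm.surjective _
  simpa using he.2 _ _ _ h

theorem reflTransGen_red1 (hσ : IsFolding S G σ) {H : Autom A}
    (h : Relation.ReflTransGen Red1 G H) : ∃ σ' : S.Q → H.Q, IsFolding S H σ' := by
  induction h with
  | refl => exact ⟨σ, hσ⟩
  | tail _ hstep ih => obtain ⟨τ, hτ⟩ := ih; exact hτ.red1 hstep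

theorem reflTransGen_red2 (hσ : IsFolding S G σ) (hS : S.IsRed) {H : Autom A}
    (h : Relation.ReflTransGen Red2 G H) : ∃ σ' : S.Q → H.Q, IsFolding S H σ' := by
  induction h with
  | refl => exact ⟨σ, hσ⟩
  | tail _ hstep ih => obtain ⟨τ, hτ⟩ := ih; exact hτ.red2 hS hstep

theorem of_section {X : Autom A} {σ : S.Q → X.Q} (hσ : IsFolding S X σ) {θ : S.Q → G.Q}
    (hθ : S.MapsEdges G θ) {g : G.Q → X.Q} (hg : G.IsHom X g) (hgθ : ∀ s, g (θ s) = σ s)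
    {ι : G.Q → S.Q} (hι : ∀ z, θ (ι z) = z) : IsFolding G X g := by
  have hgι : ∀ z, σ (ι z) = g z := fun z => by rw [← hgθ, hι]
  refine ⟨hg, fun x => ?_, fun e he => ?_, fun x y h => ?_, ?_⟩
  · obtain ⟨s, rfl⟩ := hσ.surjective x
    exact ⟨θ s, hgθ s⟩
  · obtain ⟨⟨x, a, y⟩, he', rfl⟩ := hσ.edge_surjective e he
    exact ⟨(θ x, a, θ y), hθ _ _ _ he', by simp [hgθ]⟩
  · simpa [hι] using (hσ.fold_of_fold (ι x) (ι y) (by rwa [hgι, hgι])).map hθ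
  · refine Set.Finite.of_finite_image (hσ.finite_ker.subset ?_)
      (f := Prod.map ι ι) fun ⟨a₁, a₂⟩ _ ⟨b₁, b₂⟩ _ h => ?_
    · rintro _ ⟨⟨x, y⟩, ⟨hxy, hne⟩, rfl⟩
      exact ⟨by simpa [hgι] using hxy, fun h => hne (by simpa [hι] using congrArg θ h)⟩
    · simpa [hι] using congrArg (Prod.map θ θ) h

end IsFolding

theorem exists_isFolding_of_reductionOf {S G H : Autom A} (hS : S.IsRed)
    (hred : ReductionOf S G) (hiso : Isomorphic G H) : ∃ σ : S.Q → H.Q, IsFolding S H σ := by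
  obtain ⟨G₁, h₁, -, h₂, -⟩ := hred
  obtain ⟨σ₁, hσ₁⟩ := (IsFolding.id S).reflTransGen_red1 h₁
  obtain ⟨σ₂, hσ₂⟩ := hσ₁.reflTransGen_red2 hS h₂
  exact hσ₂.isomorphic hiso

theorem IsFolding.identify {G X : Autom A} {σ : G.Q → X.Q} (hσ : IsFolding G X σ) {p q : G.Q}
    (hpq : p ≠ q) (hσpq : σ p = σ q) : IsFolding (G.identify hpq) X (fun z => σ z.val) :=
  hσ.of_section (G.isHom_collapse hpq).2 (hσ.isHom.identify hpq hσpq)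
    (apply_collapse_val p hpq hσpq) (ι := Subtype.val) (collapse_val p hpq)

theorem ncard_kerPairs_identify_lt {G : Autom A} {Z : Type} {σ : G.Q → Z}
    (hfin : (kerPairs σ).Finite) {p q : G.Q} (hpq : p ≠ q) (hσpq : σ p = σ q) :
    (kerPairs fun z : (G.identify hpq).Q => σ z.val).ncard < (kerPairs σ).ncard := by
  have himg : Prod.map Subtype.val Subtype.val '' (kerPairs fun z : (G.identify hpq).Q => σ z.val)
      ⊆ kerPairs σ \ {(p, q)} := by
    rintro _ ⟨⟨x, y⟩, ⟨hxy, hne⟩, rfl⟩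
    exact ⟨⟨hxy, fun h => hne (Subtype.ext h)⟩, fun h => y.2 (congrArg Prod.snd h)⟩
  calc _ = (Prod.map Subtype.val Subtype.val '' _).ncard :=
        (Set.ncard_image_of_injective _ (Subtype.val_injective.prodMap Subtype.val_injective)).symm
    _ ≤ (kerPairs σ \ {(p, q)}).ncard := Set.ncard_le_ncard himg hfin.sdiff
    _ < (kerPairs σ).ncard := Set.ncard_sdiff_singleton_lt_of_mem ⟨hσpq, hpq⟩ hfin

theorem IsFolding.isomorphic_of_injective {G X : Autom A} {σ : G.Q → X.Q}
    (hσ : IsFolding G X σ) (hinj : Injective σ) : Isomorphic G X := by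
  let e := Equiv.ofBijective σ ⟨hinj, hσ.surjective⟩
  refine ⟨e, hσ.isHom, (Equiv.symm_apply_eq e).2 hσ.isHom.1.symm, fun x a y he => ?_⟩
  obtain ⟨⟨x', a', y'⟩, he', h⟩ := hσ.edge_surjective _ he
  simp only [Prod.mk.injEq] at h
  obtain ⟨rfl, rfl, rfl⟩ := h
  rwa [show e.symm (σ x') = x' from e.symm_apply_apply x',
    show e.symm (σ y') = y' from e.symm_apply_apply y']

theorem IsFolding.exists_red1 {G X : Autom A} (hX : X.Deterministic) {σ : G.Q → X.Q}
    (hσ : IsFolding G X σ) :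
    ∃ G', Relation.ReflTransGen Red1 G G' ∧ G'.Deterministic ∧ Isomorphic G' X := by
  induction hK : (kerPairs σ).ncard using Nat.strong_induction_on generalizing G with
  | _ n ih =>
    rcases (kerPairs σ).eq_empty_or_nonempty with h | ⟨⟨x, y⟩, hxy, hne⟩
    · have hinj : Injective σ := fun x y hxy => by
        by_contra hne
        exact (Set.eq_empty_iff_forall_notMem.1 h) (x, y) ⟨hxy, hne⟩
      exact ⟨G, .refl, fun x a y y' h h' => hinj (hX _ _ _ _ (hσ.isHom.2 _ _ _ h)
        (hσ.isHom.2 _ _ _ h')), hσ.isomorphic_of_injective hinj⟩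
    · obtain ⟨p, q, r, a, hpq, e₁, e₂⟩ := (hσ.fold_of_eq hxy).exists_fold_pair hne
      have hσpq : σ p = σ q :=
        Fold.eq_of_deterministic hX hσ.isHom.2 (Fold.move (Fold.refl r) e₁ e₂)
      obtain ⟨G', hch, hdet, hiso⟩ :=
        ih _ (hK ▸ ncard_kerPairs_identify_lt hσ.finite_ker hpq hσpq) (hσ.identify hpq hσpq) rfl
      exact ⟨G', .head ⟨p, q, r, a, hpq, e₁, e₂, G.isIdentification_identify hpq⟩ hch, hdet, hiso⟩

/-- Folding the expansion of `M` by `(p, W 0 ⋯ W (n-1), q)` identifies no two states of `M`: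
`M` and the new path `y` map into a deterministic dual automaton, injectively on `M`. -/
def WalkExtension (M : Autom A) (p : M.Q) (W : ℕ → Ltr A) (n : ℕ) (q : M.Q) : Prop :=
  ∃ (Y : Autom A) (f : M.Q → Y.Q) (y : ℕ → Y.Q), Y.Deterministic ∧ Y.Dual ∧ Injective f ∧
    M.MapsEdges Y f ∧ y 0 = f p ∧ y n = f q ∧ Y.IsWalk y W 0 n

-- Reducible, so that case splits on states and transitions see `Option M.Q`, resp. `M.Q`.
@[reducible] def addPendant (M : Autom A) (p : M.Q) (a : Ltr A) : Autom A where
  Q := Option M.Q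
  q0 := some M.q0
  E := {e | match e with
    | (some x, b, some y) => (x, b, y) ∈ M.E
    | (some x, b, none) => x = p ∧ b = a
    | (none, b, some y) => y = p ∧ b = Ltr.inv a
    | (none, _, none) => False}

@[reducible] def addEdge (M : Autom A) (p : M.Q) (a : Ltr A) (q : M.Q) : Autom A where
  Q := M.Q
  q0 := M.q0
  E := M.E ∪ {(p, a, q), (q, Ltr.inv a, p)}

section Constructions

variable {M : Autom A}

theorem addPendant_deterministic (hdet : M.Deterministic) {p : M.Q} {a : Ltr A}
    (hp : ∀ y, (p, a, y) ∉ M.E) : (M.addPendant p a).Deterministic := by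
  rintro (_ | x) b (_ | y) (_ | y') h h' <;> simp only [Set.mem_ofPred_eq] at h h'
  · exact congrArg some (h.1.trans h'.1.symm)
  · rfl
  · exact (hp y' (h.1 ▸ h.2 ▸ h')).elim
  · exact (hp y (h'.1 ▸ h'.2 ▸ h)).elim
  · exact congrArg some (hdet _ _ _ _ h h')

theorem addPendant_dual (hdual : M.Dual) (p : M.Q) (a : Ltr A) :
    (M.addPendant p a).Dual := Dual.of_imp <| by
  rintro (_ | x) b (_ | y) h <;> simp only [Set.mem_ofPred_eq] at h ⊢
  · exact ⟨h.1, by rw [h.2, Ltr.inv_inv]⟩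
  · exact ⟨h.1, by rw [h.2]⟩
  · exact (hdual _ _ _).1 h

theorem addEdge_deterministic (hdet : M.Deterministic) (hdual : M.Dual) {p q : M.Q}
    {a : Ltr A} (hp : ∀ y, (p, a, y) ∉ M.E) (hq : ∀ y, (y, a, q) ∉ M.E) :
    (M.addEdge p a q).Deterministic := by
  have hq' : ∀ y, (q, Ltr.inv a, y) ∉ M.E := fun y h => hq y (by simpa using (hdual _ _ _).1 h)
  rintro x b y y' (h | h | h) (h' | h' | h') <;>
    simp only [Set.mem_singleton_iff, Prod.mk.injEq] at h h'
  · exact hdet _ _ _ _ h h'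
  · exact (hp y (h'.1 ▸ h'.2.1 ▸ h)).elim
  · exact (hq' y (h'.1 ▸ h'.2.1 ▸ h)).elim
  · exact (hp y' (h.1 ▸ h.2.1 ▸ h')).elim
  · exact h.2.2.trans h'.2.2.symm
  · exact (Ltr.inv_ne a (h'.2.1.symm.trans h.2.1)).elim
  · exact (hq' y' (h.1 ▸ h.2.1 ▸ h')).elim
  · exact (Ltr.inv_ne a (h.2.1.symm.trans h'.2.1)).elim
  · exact h.2.2.trans h'.2.2.symm

theorem addEdge_dual (hdual : M.Dual) (p : M.Q) (a : Ltr A) (q : M.Q) :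
    (M.addEdge p a q).Dual := Dual.of_imp <| by
  rintro x b y (h | h | h)
  · exact Or.inl ((hdual _ _ _).1 h)
  all_goals simp only [Set.mem_singleton_iff, Prod.mk.injEq] at h
  all_goals simp [h.1, h.2.1, h.2.2]

theorem WalkExtension.refl (hdet : M.Deterministic) (hdual : M.Dual) (p : M.Q)
    (W : ℕ → Ltr A) : M.WalkExtension p W 0 p :=
  ⟨M, id, fun _ => p, hdet, hdual, injective_id, fun _ _ _ h => h, rfl, rfl,
    fun _ _ h => absurd h (Nat.not_lt_zero _)⟩

theorem WalkExtension.single (hdet : M.Deterministic) (hdual : M.Dual) {p q : M.Q}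
    {W : ℕ → Ltr A} (hp : ∀ y, (p, W 0, y) ∉ M.E) (hq : ∀ y, (y, W 0, q) ∉ M.E) :
    M.WalkExtension p W 1 q :=
  ⟨M.addEdge p (W 0) q, id, fun j => if j = 0 then p else q,
    addEdge_deterministic hdet hdual hp hq, addEdge_dual hdual p (W 0) q, injective_id,
    fun _ _ _ h => Or.inl h, rfl, rfl, fun j _ hj => by
      obtain rfl : j = 0 := by omega
      exact Or.inr (Or.inl rfl)⟩

end Constructions

theorem WalkExtension.restrict {M M' : Autom A} {g : M.Q → M'.Q} (hg : Injective g)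
    (hge : M.MapsEdges M' g) {p q : M.Q} {W : ℕ → Ltr A} {n : ℕ}
    (h : M'.WalkExtension (g p) W n (g q)) : M.WalkExtension p W n q := by
  obtain ⟨Y, f, y, hdet, hdual, hf, hfe, hy0, hyn, hy⟩ := h
  exact ⟨Y, f ∘ g, y, hdet, hdual, hf.comp hg, fun _ _ _ h => hfe _ _ _ (hge _ _ _ h),
    hy0, hyn, hy⟩

theorem WalkExtension.glue {M : Autom A} {x s : ℕ → M.Q} {W : ℕ → Ltr A} {k l n : ℕ}
    (hkl : k ≤ l) (hln : l ≤ n) (hx : M.IsWalk x W 0 k) (hs : M.IsWalk s W l n)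
    (h : M.WalkExtension (x k) (fun d => W (k + d)) (l - k) (s l)) :
    M.WalkExtension (x 0) W n (s n) := by
  obtain ⟨Y, f, y, hdet, hdual, hf, hfe, hy0, hyn, hy⟩ := h
  have hy' : Y.IsWalk (fun j => y (j - k)) W k l := fun j h₁ h₂ => by
    simpa [show j + 1 - k = j - k + 1 by omega, show k + (j - k) = j by omega]
      using hy (j - k) (Nat.zero_le _) (by omega)
  obtain ⟨z, hz0, hzl, hz⟩ := (hx.map hfe).concat hy' (Nat.zero_le k) hkl (by simp [hy0])
  obtain ⟨z', hz'0, hz'n, hz'⟩ := hz.concat (hs.map hfe) (Nat.zero_le l) hln (by simp [hzl, hyn])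
  exact ⟨Y, f, z', hdet, hdual, hf, hfe, hz'0.trans hz0, hz'n, hz'⟩

/-- When `p = q` and `W` has the form `a v a⁻¹`, the first and last transitions fold together:
a pendant transition `p -a→ r` absorbs both, and `v` is attached at `r`. Otherwise the first
letter becomes a pendant transition and the rest is attached after it. -/
theorem walkExtension_of_not_readable {L : ℕ} (hL : 0 < L) {M : Autom A}
    (hdet : M.Deterministic) (hdual : M.Dual) {p q : M.Q} {W : ℕ → Ltr A}
    (hW : ∀ j, j + 1 < L → W (j + 1) ≠ Ltr.inv (W j)) (hp : ∀ y, (p, W 0, y) ∉ M.E)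
    (hq : ∀ y, (y, W (L - 1), q) ∉ M.E) : M.WalkExtension p W L q := by
  induction L using Nat.strong_induction_on generalizing M p q W with
  | _ L ih =>
    rcases Nat.lt_or_ge L 2 with hL1 | hL2
    · obtain rfl : L = 1 := by omega
      exact WalkExtension.single hdet hdual hp hq
    have hdet' := addPendant_deterministic hdet hp
    have hdual' := addPendant_dual hdual p (W 0)
    have hge : M.MapsEdges (M.addPendant p (W 0)) some := fun _ _ _ h => h
    have hW' : ∀ j, j + 1 < L - 1 → W (1 + (j + 1)) ≠ Ltr.inv (W (1 + j)) := fun j hj => by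
      simpa [Nat.add_assoc, Nat.add_comm 1] using hW (j + 1) (by omega)
    have hr : ∀ y, (none, W (1 + 0), y) ∉ (M.addPendant p (W 0)).E := by
      rintro (_ | y) h <;> simp only [Set.mem_ofPred_eq] at h
      exact hW 0 (by omega) (by simpa [Nat.add_comm] using h.2)
    let x : ℕ → (M.addPendant p (W 0)).Q := fun j => if j = 0 then some p else none
    have hx : (M.addPendant p (W 0)).IsWalk x W 0 1 := fun j _ hj => by
      obtain rfl : j = 0 := by omega
      simp [x]
    refine WalkExtension.restrict (Option.some_injective _) hge ?_
    by_cases hloop : p = q ∧ W (L - 1) = Ltr.inv (W 0)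
    · obtain ⟨rfl, hlast⟩ := hloop
      have hL3 : 3 ≤ L := by
        by_contra
        exact hW 0 (by omega) (by simpa [show L - 1 = 1 by omega] using hlast)
      let s : ℕ → (M.addPendant p (W 0)).Q := fun j => if j < L then none else some p
      have hs : (M.addPendant p (W 0)).IsWalk s W (L - 1) L := fun j h₁ h₂ => by
        obtain rfl : j = L - 1 := by omega
        simpa [s, show L - 1 < L by omega, show ¬ L - 1 + 1 < L by omega] using hlast
      have hmid := ih (L - 2) (by omega) (by omega) hdet' hdual' (p := none) (q := none)
        (W := fun d => W (1 + d)) (fun j hj => hW' j (by omega)) hr fun y h => by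
          rcases y with _ | y <;> simp only [Set.mem_ofPred_eq] at h
          refine hW (L - 2) (by omega) ?_
          rw [show L - 2 + 1 = L - 1 by omega, hlast, ← h.2,
            show 1 + (L - 2 - 1) = L - 2 by omega]
      have := WalkExtension.glue (by omega) (by omega) hx hs (by
        simpa [x, s, show L - 1 - 1 = L - 2 by omega, show L - 1 < L by omega] using hmid)
      simpa [x, s] using this
    · have hmid := ih (L - 1) (by omega) (by omega) hdet' hdual' (p := none) (q := some q)
        (W := fun d => W (1 + d)) (fun j hj => hW' j (by omega)) hr fun y h => by
          rcases y with _ | y <;> simp only [Set.mem_ofPred_eq] at h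
          · exact hloop ⟨h.1.symm, by simpa [show 1 + (L - 1 - 1) = L - 1 by omega] using h.2⟩
          · exact hq y (by simpa [show 1 + (L - 1 - 1) = L - 1 by omega] using h)
      have := WalkExtension.glue (s := fun _ => some q) (k := 1) (l := L) (by omega) le_rfl hx
        (fun _ h₁ h₂ => absurd h₂ (Nat.not_lt.2 h₁)) (by simpa [x] using hmid)
      simpa [x] using this

theorem walkExtension_of_maximal_walks {M : Autom A} (hdet : M.Deterministic)
    (hdual : M.Dual) {W : ℕ → Ltr A} {n : ℕ}
    (hW : ∀ j, j + 1 < n → W (j + 1) ≠ Ltr.inv (W j)) {x s : ℕ → M.Q} {k l : ℕ}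
    (hl : l ≤ n) (hx : M.IsWalk x W 0 k) (hxmax : k < n → ∀ y, (x k, W k, y) ∉ M.E)
    (hs : M.IsWalk s W l n) (hsmax : 0 < l → ∀ y, (y, W (l - 1), s l) ∉ M.E)
    (hagree : ∀ i, l ≤ i → i ≤ k → x i = s i) : M.WalkExtension (x 0) W n (s n) := by
  rcases le_or_gt l k with hlk | hkl
  · refine WalkExtension.glue le_rfl hl (hx.mono le_rfl hlk) hs ?_
    rw [Nat.sub_self, hagree l le_rfl hlk]
    exact WalkExtension.refl hdet hdual _ _
  · refine WalkExtension.glue hkl.le hl hx hs (walkExtension_of_not_readable (by omega) hdet hdual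
      (fun j hj => hW (k + j) (by omega)) (by simpa using hxmax (by omega)) ?_)
    simpa [show k + (l - k - 1) = l - 1 by omega] using hsmax (by omega)

namespace Expansion

variable {M N₁ N : Autom A} {W : ℕ → Ltr A} {n : ℕ} {σ : N₁.Q → N.Q}

theorem injective_of_walkExtension {p q : M.Q} (E : M.Expansion p W n q N₁)
    (hσ : IsFolding N₁ N σ) (hext : M.WalkExtension p W n q) : Injective (σ ∘ E.emb) := by
  obtain ⟨Y, f, y, hdet, hdual, hf, hfe, hy0, hyn, hy⟩ := hext
  obtain ⟨F, hF, hFemb, -⟩ := E.exists_lift hdual hfe hy0 hyn hy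
  intro u v huv
  apply hf
  rw [← hFemb, ← hFemb]
  exact Fold.eq_of_deterministic hdet hF (hσ.fold_of_eq huv)

theorem iStep (E : M.Expansion M.q0 W n M.q0 N₁) (hMdual : M.Dual) (hN₁ : N₁.IsRed)
    (hNdet : N.Deterministic) (hNdual : N.Dual) (hNred : N.IsRed) (hσ : IsFolding N₁ N σ)
    {x s : ℕ → M.Q} {i : ℕ} (hi : i ≤ n) (hx0 : x 0 = M.q0) (hx : M.IsWalk x W 0 i)
    (hsn : s n = M.q0) (hs : M.IsWalk s W i n) (hne : x i ≠ s i) : M.IStep (x i) (s i) N := by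
  have hc := (M.isHom_collapse hne).mapsEdges
  obtain ⟨y, hy0, hyn, hy⟩ := (hx.map hc).concat (hs.map hc) (Nat.zero_le i) hi
    (collapse_right (x i) hne).symm
  obtain ⟨θ, hθ, hθemb, -⟩ := E.exists_lift (hMdual.identify hne) hc
    (hy0.trans (congrArg _ hx0)) (hyn.trans (congrArg _ hsn)) hy
  have hπ : σ (E.emb (x i)) = σ (E.emb (s i)) :=
    (E.map_emb_prefix hNdet hσ.isHom.2 hi hx0 hx).trans
      (E.map_emb_suffix hNdet hNdual hσ.isHom.2 hi hsn hs).symm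
  let g : (M.identify hne).Q → N.Q := fun z => σ (E.emb z.val)
  have hghom : (M.identify hne).IsHom N g := (hσ.isHom.comp E.isHom_emb).identify hne hπ
  have hgθ : g ∘ θ = σ := IsHom.eq_of_trim hN₁.trim hNdet
    (hghom.comp ⟨by rw [← E.emb_q0, hθemb]; rfl, hθ⟩) hσ.isHom
  have hfold : IsFolding (M.identify hne) N g :=
    hσ.of_section hθ hghom (congrFun hgθ) (ι := E.emb ∘ Subtype.val)
      fun z => (hθemb z.val).trans (collapse_val _ hne z)
  obtain ⟨G', hch, hdet, hiso⟩ := hfold.exists_red1 hNdet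
  refine ⟨hne, M.identify hne, G', M.isIdentification_identify hne,
    ⟨G', hch, hdet, .refl, ?_⟩, hiso⟩
  obtain ⟨e, -, he⟩ := hiso
  exact hNred.not_red2_of_surjective he e.symm.surjective

end Expansion

end Autom

theorem estep_to_istep_or_restep_general
    {A : Type} (M N : Autom A)
    (hMinv : M.IsInv) (hMred : M.IsRed) (hNinv : N.IsInv) (hNred : N.IsRed)
    (w : List (Ltr A)) (hwred : IsReducedWord w)
    (h : M.EStep w N) :
    Autom.IStepAny M N ∨
      ∃ (p q : M.Q) (u : List (Ltr A)), IsReducedWord u ∧ u.length ≤ w.length ∧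
        M.REStep p u q N := by
  obtain ⟨hMdet, -, hMdual⟩ := hMinv
  obtain ⟨hNdet, -, hNdual⟩ := hNinv
  obtain ⟨N₁, N₂, hexp, hred, hiso⟩ := id h
  obtain ⟨W, hwW, ⟨E⟩⟩ := hexp.exists_expansion
  set n := w.length
  rw [hwW] at hwred
  obtain ⟨σ, hσ⟩ := Autom.exists_isFolding_of_reductionOf (E.isRed hMred hwred) hred hiso
  obtain ⟨k, hk, x, hx0, hx, hxmax⟩ := Autom.exists_maximal_walk M M.q0 W n
  obtain ⟨l, hl, s, hsn, hs, hsmax⟩ := Autom.exists_maximal_walk_rev hMdual M.q0 W n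
  by_cases hA : ∃ i, l ≤ i ∧ i ≤ k ∧ x i ≠ s i
  · obtain ⟨i, hli, hik, hne⟩ := hA
    exact Or.inl ⟨x i, s i, E.iStep hMdual (E.isRed hMred hwred) hNdet hNdual hNred hσ
      (hik.trans hk) hx0 (hx.mono le_rfl hik) hsn (hs.mono hli le_rfl) hne⟩
  · push Not at hA
    have hext := Autom.walkExtension_of_maximal_walks hMdet hMdual
      (fun j hj => hwred.ne_inv_of_map_range hj) hl hx hxmax hs hsmax hA
    rw [hx0, hsn] at hext
    exact Or.inr ⟨M.q0, M.q0, w, hwW ▸ hwred, le_rfl, h, σ ∘ E.emb,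
      E.injective_of_walkExtension hσ hext, hσ.isHom.comp E.isHom_emb⟩

/-- Proposition 2.3: if `M →e^w N` then `M →i N` or `M →re^{(p,u,q)} N` for some
states `p, q` and some reduced word `u` with `|u| ≤ |w|`. -/
theorem estep_to_istep_or_restep
    {A : Type} (M N : Autom A)
    (hMinv : M.IsInv) (hMred : M.IsRed) (hNinv : N.IsInv) (hNred : N.IsRed)
    (w : List (Ltr A)) (hw : w ≠ []) (hwred : IsReducedWord w)
    (h : M.EStep w N) :
    Autom.IStepAny M N ∨
      ∃ (p q : M.Q) (u : List (Ltr A)), IsReducedWord u ∧ u.length ≤ w.length ∧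
        M.REStep p u q N :=
  estep_to_istep_or_restep_general M N hMinv hMred hNinv hNred w hwred h
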